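/- Let S, A ≥ 1 be natural numbers, and let T ≥ S·A. Consider epochs e = 1, …, E with visitation counts ν_e : {1,…,S} × {1,…,A} → ℕ, and define N_e(s,a) = ∑_{i=1}^{e−1} ν_i(s,a). Assume: (i) ∑_{e=1}^{E} ∑_{s,a} ν_e(s,a) ≤ T; (ii) for every epoch e and every pair (s,a), ν_e(s,a) ≤ max{1, N_e(s,a)}; and (iii) for every epoch e ≤ E − 1 there is a pair (s,a) with ν_e(s,a) = max{1, N_e(s,a)}. Then E ≤ S·A·log₂(8T/(S·A)). -/

import Mathlib

/-!
If the pair `sa` ends `K sa` of the first `E - 1` epochs, its cumulative count at least doubles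
each time (`N ↦ N + max 1 N`), so `2 ^ K sa ≤ 2 N sa + 1`; summing over the `S A` pairs gives
`∑ 2 ^ K sa ≤ 2 T + S A ≤ 3 T`. Jensen's inequality for `x ↦ 2 ^ x` turns this into
`E - 1 ≤ ∑ K sa ≤ S A log₂ (3 T / S A)`, and since `S A ≥ 1` the remaining `1` is absorbed by
`S A log₂ (3 T / S A) + S A = S A log₂ (6 T / S A) ≤ S A log₂ (8 T / S A)`.
-/

open Finset

/-- For `g = (ν · sa)` these are the epochs before `e` that the pair `sa` ends. -/
def doublingSteps (g : ℕ → ℕ) (e : ℕ) : Finset ℕ :=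
  {i ∈ Ico 1 e | g i = max 1 (∑ j ∈ Ico 1 i, g j)}

theorem two_pow_card_doublingSteps_le (g : ℕ → ℕ) (e : ℕ) :
    2 ^ #(doublingSteps g e) ≤ max 1 (2 * ∑ i ∈ Ico 1 e, g i) := by
  induction e with
  | zero => simp [doublingSteps]
  | succ e ih =>
    rcases Nat.eq_zero_or_pos e with rfl | he
    · simp [doublingSteps]
    have hIco : Ico 1 (e + 1) = insert e (Ico 1 e) := Nat.Ico_succ_right_eq_insert_Ico he
    have hsteps : doublingSteps g (e + 1) =
        if g e = max 1 (∑ j ∈ Ico 1 e, g j) then insert e (doublingSteps g e)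
        else doublingSteps g e := by
      rw [doublingSteps, hIco, filter_insert]; rfl
    rw [hIco, sum_insert (by simp), hsteps]
    split_ifs with hstep
    · rw [card_insert_of_notMem (by simp [doublingSteps]), pow_succ]
      omega
    · omega

theorem sum_two_pow_card_doublingSteps_le {ι : Type*} [Fintype ι] (ν : ℕ → ι → ℕ) (e : ℕ) :
    ∑ i, 2 ^ #(doublingSteps (ν · i) e) ≤ 2 * ∑ j ∈ Ico 1 e, ∑ i, ν j i + Fintype.card ι := by
  calc ∑ i, 2 ^ #(doublingSteps (ν · i) e)
      ≤ ∑ i, (2 * ∑ j ∈ Ico 1 e, ν j i + 1) :=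
        sum_le_sum fun i _ => (two_pow_card_doublingSteps_le _ e).trans (by omega)
    _ = 2 * ∑ j ∈ Ico 1 e, ∑ i, ν j i + Fintype.card ι := by
        rw [sum_add_distrib, ← mul_sum, sum_comm]; simp

theorem sub_one_le_sum_card_doublingSteps {ι : Type*} [Fintype ι] (ν : ℕ → ι → ℕ) (E : ℕ)
    (hend : ∀ e ∈ Icc 1 (E - 1), ∃ i, ν e i = max 1 (∑ j ∈ Ico 1 e, ν j i)) :
    E - 1 ≤ ∑ i, #(doublingSteps (ν · i) E) := by
  have hcover : Ico 1 E ⊆ univ.biUnion fun i => doublingSteps (ν · i) E := by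
    intro e he
    obtain ⟨i, hi⟩ := hend e (by simp at he ⊢; omega)
    simp only [mem_biUnion, mem_univ, true_and, doublingSteps, mem_filter]
    exact ⟨i, he, hi⟩
  simpa using (card_le_card hcover).trans card_biUnion_le

theorem sum_le_card_mul_logb_mean_rpow {ι : Type*} {s : Finset ι} (hs : s.Nonempty) {b : ℝ}
    (hb : 1 < b) (x : ι → ℝ) : ∑ i ∈ s, x i ≤ #s * Real.logb b ((∑ i ∈ s, b ^ x i) / #s) := by
  have hcard : (0 : ℝ) < #s := by exact_mod_cast hs.card_pos
  have hjensen := (convexOn_rpow_left (zero_lt_one.trans hb)).map_sum_le (t := s)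
    (w := fun _ => (#s : ℝ)⁻¹) (p := x) (fun _ _ => by positivity) (by simp [hcard.ne'])
    (fun _ _ => Set.mem_univ _)
  simp only [smul_eq_mul, inv_mul_eq_div, ← sum_div] at hjensen
  rw [← div_le_iff₀' hcard, Real.le_logb_iff_rpow_le hb (hjensen.trans_lt' (by positivity))]
  exact hjensen

theorem epoch_count_bound_general
    (S A T E : ℕ) (hS : 1 ≤ S) (hA : 1 ≤ A) (hT : S * A ≤ T)
    (ν : ℕ → Fin S × Fin A → ℕ)
    (h1 : ∑ e ∈ Finset.Icc 1 E, ∑ sa : Fin S × Fin A, ν e sa ≤ T)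
    (h3 : ∀ e ∈ Finset.Icc 1 (E - 1), ∃ sa : Fin S × Fin A,
      ν e sa = max 1 (∑ i ∈ Finset.Ico 1 e, ν i sa)) :
    (E : ℝ) ≤ (S : ℝ) * (A : ℝ) * Real.logb 2 (8 * (T : ℝ) / ((S : ℝ) * (A : ℝ))) := by
  have hepochs := sub_one_le_sum_card_doublingSteps ν E h3
  have hpow := sum_two_pow_card_doublingSteps_le ν E
  have hvisits : ∑ e ∈ Ico 1 E, ∑ sa, ν e sa ≤ T :=
    (sum_le_sum_of_subset Ico_subset_Icc_self).trans h1
  simp only [Fintype.card_prod, Fintype.card_fin] at hpow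
  have hn : (1 : ℝ) ≤ S * A := by exact_mod_cast Nat.one_le_iff_ne_zero.mpr (by positivity)
  have hT₀ : (0 : ℝ) < T := by
    have : (S * A : ℝ) ≤ T := by exact_mod_cast hT
    linarith
  have hpairs : (univ : Finset (Fin S × Fin A)).Nonempty := ⟨(⟨0, hS⟩, ⟨0, hA⟩), mem_univ _⟩
  have hjensen := sum_le_card_mul_logb_mean_rpow hpairs one_lt_two
    fun sa => (#(doublingSteps (ν · sa) E) : ℝ)
  rw [card_univ, Fintype.card_prod, Fintype.card_fin, Fintype.card_fin, Nat.cast_mul] at hjensen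
  have hlog : Real.logb 2 ((∑ sa, (2 : ℝ) ^ (#(doublingSteps (ν · sa) E) : ℝ)) / (S * A)) ≤
      Real.logb 2 (3 * T / (S * A)) := by
    gcongr
    · norm_num
    · simp only [Real.rpow_natCast]
      exact_mod_cast (by omega : ∑ sa, 2 ^ #(doublingSteps (ν · sa) E) ≤ 3 * T)
  calc (E : ℝ) ≤ ∑ sa, (#(doublingSteps (ν · sa) E) : ℝ) + 1 := by
        rw [← Nat.cast_sum]; norm_cast; omega
    _ ≤ S * A * Real.logb 2 (3 * T / (S * A)) + S * A := by
        gcongr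
        exact hjensen.trans (by gcongr)
    _ = S * A * Real.logb 2 (6 * T / (S * A)) := by
        rw [show 6 * (T : ℝ) / (S * A) = 2 * (3 * T / (S * A)) by ring,
          Real.logb_mul two_ne_zero (by positivity), Real.logb_self_eq_one one_lt_two]
        ring
    _ ≤ S * A * Real.logb 2 (8 * T / (S * A)) := by
        gcongr <;> norm_num

/-- Epoch-count bound for the doubling trick (Proposition 18 of Auer et al.):
with epochs `e = 1, …, E`, per-epoch visitation counts `ν e` and cumulative counts
`N e (s,a) = ∑_{i=1}^{e-1} ν i (s,a)`, if the total number of visits is at most `T`,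
each epoch's count never exceeds `max 1 (N e (s,a))`, and every epoch `e ≤ E - 1`
ends because `ν e (s,a) = max 1 (N e (s,a))` for some `(s,a)`, then
`E ≤ S A log₂(8T/(S A))`. -/
theorem epoch_count_bound
    (S A T E : ℕ) (hS : 1 ≤ S) (hA : 1 ≤ A) (hT : S * A ≤ T)
    (ν : ℕ → Fin S × Fin A → ℕ)
    (h1 : ∑ e ∈ Finset.Icc 1 E, ∑ sa : Fin S × Fin A, ν e sa ≤ T)
    (h2 : ∀ e ∈ Finset.Icc 1 E, ∀ sa : Fin S × Fin A,
      ν e sa ≤ max 1 (∑ i ∈ Finset.Ico 1 e, ν i sa))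
    (h3 : ∀ e ∈ Finset.Icc 1 (E - 1), ∃ sa : Fin S × Fin A,
      ν e sa = max 1 (∑ i ∈ Finset.Ico 1 e, ν i sa)) :
    (E : ℝ) ≤ (S : ℝ) * (A : ℝ) * Real.logb 2 (8 * (T : ℝ) / ((S : ℝ) * (A : ℝ))) :=
  epoch_count_bound_general S A T E hS hA hT ν h1 h3
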